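/- Let p be a prime, k an algebraically closed field of characteristic p, and G = SL₂(F_p) (or GL₂(F_p)) acting on Sym^{p-1}(k²). Then for the Borel subgroup B(F_p) of upper triangular matrices, the induced representation Ind_{B(F_p)}^{GL₂(F_p)}(1) of the trivial character decomposes as a direct sum of the trivial representation Sym⁰ and Sym^{p-1}. -/

import Mathlib

open MvPolynomial

/-- Linear substitution action of a 2×2 matrix over `F_p` on two-variable polynomials over a
field `k` of characteristic `p`. -/
noncomputable def symAct (p : ℕ) [Fact p.Prime] (k : Type) [Field k] [CharP k p]
    (g : Matrix (Fin 2) (Fin 2) (ZMod p)) :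
    MvPolynomial (Fin 2) k →ₐ[k] MvPolynomial (Fin 2) k :=
  aeval (fun i => ∑ j : Fin 2, (ZMod.castHom (dvd_refl p) k (g j i)) • (X j : MvPolynomial (Fin 2) k))

/-- The induction to `GL₂(F_p)` of the trivial character of the Borel subgroup `B(F_p)`:
`k`-valued functions on `GL₂(F_p)` that are invariant under left translation by upper
triangular matrices. -/
def IndTriv (p : ℕ) [Fact p.Prime] (k : Type) [Field k] :
    Submodule k (GL (Fin 2) (ZMod p) → k) where
  carrier := {f | ∀ b g : GL (Fin 2) (ZMod p),
    (b : Matrix (Fin 2) (Fin 2) (ZMod p)) 1 0 = 0 → f (b * g) = f g}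
  add_mem' := by
    intro f₁ f₂ h₁ h₂ b g hb
    simp [Pi.add_apply, h₁ b g hb, h₂ b g hb]
  zero_mem' := by intro b g hb; simp
  smul_mem' := by
    intro c f hf b g hb
    simp [Pi.smul_apply, hf b g hb]

/-!
For `c` constant and `P` homogeneous of degree `p - 1`, the function `g ↦ (c + P)(bottom row of g)`
is `B(F_p)`-invariant: left multiplication by `b ∈ B(F_p)` scales the bottom row by `b₁₁ ∈ F_p^×`,
and `b₁₁ ^ (p - 1) = 1`. This map is equivariant for substitution and right translation. An induced
function is determined by its values on representatives of `B(F_p) \ GL₂(F_p) ≅ ℙ¹(F_p)`, where the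
map becomes evaluation at the `p + 1` points of `ℙ¹(F_p)`. That evaluation is onto, since
`1 - L ^ (p - 1)` is the indicator of the zero of a linear form `L`, hence bijective, both sides
having dimension `p + 1`.
-/

namespace MvPolynomial

theorem IsHomogeneous.eval_smul {σ R : Type*} [CommSemiring R] {φ : MvPolynomial σ R} {n : ℕ}
    (hφ : φ.IsHomogeneous n) (a : R) (x : σ → R) :
    eval (a • x) φ = a ^ n * eval x φ := by
  simp only [eval_eq, Finset.mul_sum]
  refine Finset.sum_congr rfl fun d hd => ?_
  have hdeg : ∑ i ∈ d.support, d i = n := by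
    rw [← Finsupp.degree_apply, Finsupp.degree_eq_weight_one]; exact hφ (mem_support_iff.mp hd)
  simp only [Pi.smul_apply, smul_eq_mul, mul_pow, Finset.prod_mul_distrib,
    Finset.prod_pow_eq_pow_sum, hdeg]
  ring

theorem finrank_homogeneousSubmodule {σ K : Type*} [Fintype σ] [Field K] (n : ℕ) :
    Module.finrank K (homogeneousSubmodule σ K n) = (Fintype.card σ + n - 1).choose n := by
  classical
  rw [homogeneousSubmodule_eq_finsupp_supported]
  change Module.finrank K (restrictSupport K _) = _
  rw [Module.finrank_eq_nat_card_basis (basisRestrictSupport K _)]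
  have : {d : σ →₀ ℕ | d.degree = n} = ↑((Finset.univ : Finset σ).finsuppAntidiag n) := by
    ext d; simp [Finsupp.degree_eq_sum]
  rw [this, Nat.card_coe_set_eq, Set.ncard_coe_finset, Finset.card_finsuppAntidiag_nat_eq_choose,
    Finset.card_univ]

instance {σ R : Type*} [Finite σ] [CommSemiring R] (n : ℕ) :
    Module.Finite R (homogeneousSubmodule σ R n) :=
  Module.Finite.iff_fg.mpr (homogeneousSubmodule_fg σ R n)

end MvPolynomial

section ProjectiveLine

variable {F : Type*} [Field F]

/-- `ℙ¹(F)` is modelled by `Option F`: `none ↦ (0 : 1)` and `some t ↦ (1 : t)`. -/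
def projLineRep : Option F → Fin 2 → F
  | none => ![0, 1]
  | some t => ![1, t]

def projLineForm (o : Option F) (v : Fin 2 → F) : F :=
  projLineRep o 0 * v 1 - projLineRep o 1 * v 0

lemma projLineForm_projLineRep_eq_zero_iff (o o' : Option F) :
    projLineForm o (projLineRep o') = 0 ↔ o = o' := by
  cases o <;> cases o' <;> simp [projLineForm, projLineRep, sub_eq_zero, eq_comm]

lemma exists_eq_smul_projLineRep (v : Fin 2 → F) :
    ∃ (o : Option F) (a : F), v = a • projLineRep o := by
  by_cases h0 : v 0 = 0
  · refine ⟨none, v 1, funext fun i => ?_⟩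
    fin_cases i <;> simp [projLineRep, h0]
  · refine ⟨some (v 1 / v 0), v 0, funext fun i => ?_⟩
    fin_cases i <;> simp [projLineRep, mul_div_cancel₀ _ h0]

variable {K : Type*} [Field K] (ι : F →+* K)

noncomputable def projLineFormPoly (o : Option F) : MvPolynomial (Fin 2) K :=
  C (ι (projLineRep o 0)) * X 1 - C (ι (projLineRep o 1)) * X 0

lemma isHomogeneous_projLineFormPoly (o : Option F) : (projLineFormPoly ι o).IsHomogeneous 1 :=
  (isHomogeneous_C_mul_X _ _).sub (isHomogeneous_C_mul_X _ _)

lemma eval_projLineFormPoly (o : Option F) (v : Fin 2 → F) :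
    eval (ι ∘ v) (projLineFormPoly ι o) = ι (projLineForm o v) := by
  simp [projLineFormPoly, projLineForm]

noncomputable def homogeneousPairSum (R : Type*) [CommSemiring R] (m : ℕ) :
    homogeneousSubmodule (Fin 2) R 0 × homogeneousSubmodule (Fin 2) R m →ₗ[R]
      MvPolynomial (Fin 2) R :=
  (homogeneousSubmodule (Fin 2) R 0).subtype.coprod (homogeneousSubmodule (Fin 2) R m).subtype

lemma eval_smul_homogeneousPairSum {R : Type*} [CommSemiring R] {m : ℕ}
    (q : homogeneousSubmodule (Fin 2) R 0 × homogeneousSubmodule (Fin 2) R m)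
    {a : R} (ha : a ^ m = 1) (x : Fin 2 → R) :
    eval (a • x) (homogeneousPairSum R m q) = eval x (homogeneousPairSum R m q) := by
  simp [homogeneousPairSum, q.1.2.eval_smul, q.2.2.eval_smul, ha]

noncomputable def evalProjLine (m : ℕ) :
    homogeneousSubmodule (Fin 2) K 0 × homogeneousSubmodule (Fin 2) K m →ₗ[K] (Option F → K) :=
  LinearMap.pi fun o => (aeval (ι ∘ projLineRep o)).toLinearMap ∘ₗ homogeneousPairSum K m

lemma evalProjLine_apply (m : ℕ)
    (q : homogeneousSubmodule (Fin 2) K 0 × homogeneousSubmodule (Fin 2) K m) (o : Option F) :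
    evalProjLine ι m q o = eval (ι ∘ projLineRep o) (homogeneousPairSum K m q) := by
  simp [evalProjLine]

variable [Fintype F]

lemma evalProjLine_indicator [DecidableEq F] (o : Option F) :
    evalProjLine ι (Fintype.card F - 1)
      (⟨1, isHomogeneous_one _ _⟩, ⟨-projLineFormPoly ι o ^ (Fintype.card F - 1), by
        simpa only [mem_homogeneousSubmodule, one_mul] using
          ((isHomogeneous_projLineFormPoly ι o).pow _).neg⟩) = Pi.single o 1 := by
  funext o'
  have hq : Fintype.card F - 1 ≠ 0 := by
    have := Fintype.one_lt_card (α := F); omega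
  rw [evalProjLine_apply]
  simp only [homogeneousPairSum, LinearMap.coprod_apply, Submodule.subtype_apply, map_add, map_one,
    map_neg, map_pow, eval_projLineFormPoly]
  by_cases h : o = o'
  · subst h
    simp [(projLineForm_projLineRep_eq_zero_iff o o).mpr rfl, hq]
  · rw [← map_pow, FiniteField.pow_card_sub_one_eq_one _
      (mt (projLineForm_projLineRep_eq_zero_iff o o').mp h), Pi.single_eq_of_ne' h]
    simp

lemma evalProjLine_bijective :
    Function.Bijective (evalProjLine (K := K) ι (Fintype.card F - 1)) := by
  classical
  have hsurj : Function.Surjective (evalProjLine ι (Fintype.card F - 1)) := by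
    rw [← LinearMap.range_eq_top, eq_top_iff, ← (Pi.basisFun K (Option F)).span_eq,
      Submodule.span_le]
    rintro _ ⟨o, rfl⟩
    exact ⟨_, by simpa using evalProjLine_indicator ι o⟩
  refine ⟨(LinearMap.injective_iff_surjective_of_finrank_eq_finrank ?_).mpr hsurj, hsurj⟩
  obtain ⟨q, hq⟩ := Nat.exists_eq_add_of_lt (Fintype.card_pos (α := F))
  rw [Module.finrank_prod, finrank_homogeneousSubmodule, finrank_homogeneousSubmodule,
    Module.finrank_fintype_fun_eq_card, Fintype.card_option, Fintype.card_fin, hq]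
  simp [Nat.choose_succ_self_right, add_comm]

end ProjectiveLine

section GeneralLinear

variable {F : Type*} [Field F]

noncomputable def projLineSection (o : Option F) : GL (Fin 2) F :=
  Matrix.GeneralLinearGroup.mkOfDetNeZero
    (match o with
      | none => 1
      | some t => !![0, -1; 1, t])
    (by cases o <;> simp [Matrix.det_fin_two_of])

lemma projLineSection_row_one (o : Option F) :
    (projLineSection o : Matrix (Fin 2) (Fin 2) F) 1 = projLineRep o := by
  funext i
  cases o <;> fin_cases i <;> rfl

end GeneralLinear

section InducedRepresentation

variable {p : ℕ} [Fact p.Prime] {k : Type} [Field k]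

lemma apply_eq_of_row_one_eq_smul {f : GL (Fin 2) (ZMod p) → k} (hf : f ∈ IndTriv p k)
    {g h : GL (Fin 2) (ZMod p)} {a : ZMod p}
    (hrow : (g : Matrix (Fin 2) (Fin 2) (ZMod p)) 1 =
      a • (h : Matrix (Fin 2) (Fin 2) (ZMod p)) 1) :
    f g = f h := by
  have hb : ((g * h⁻¹ : GL (Fin 2) (ZMod p)) : Matrix (Fin 2) (Fin 2) (ZMod p)) 1 0 = 0 := by
    rw [Units.val_mul, Matrix.mul_apply_eq_vecMul, hrow, Matrix.smul_vecMul,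
      ← Matrix.mul_apply_eq_vecMul, ← Units.val_mul, mul_inv_cancel]
    simp
  simpa using hf (g * h⁻¹) h hb

/-- Restriction to representatives of `B(F_p) \ GL₂(F_p) ≅ ℙ¹(F_p)`. -/
noncomputable def restrictProjLine (p : ℕ) [Fact p.Prime] (k : Type) [Field k] :
    IndTriv p k →ₗ[k] (Option (ZMod p) → k) :=
  LinearMap.funLeft k k projLineSection ∘ₗ (IndTriv p k).subtype

lemma restrictProjLine_injective : Function.Injective (restrictProjLine p k) := by
  rw [← LinearMap.ker_eq_bot, LinearMap.ker_eq_bot']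
  intro f hf
  ext g
  obtain ⟨o, a, ha⟩ := exists_eq_smul_projLineRep ((g : Matrix (Fin 2) (Fin 2) (ZMod p)) 1)
  rw [← projLineSection_row_one] at ha
  exact (apply_eq_of_row_one_eq_smul f.2 ha).trans (congrFun hf o)

end InducedRepresentation

section Decomposition

variable {p : ℕ} [Fact p.Prime] {k : Type} [Field k] [CharP k p]

def bottomRow (p : ℕ) [Fact p.Prime] (k : Type) [Field k] [CharP k p] (g : GL (Fin 2) (ZMod p)) :
    Fin 2 → k :=
  ZMod.castHom (dvd_refl p) k ∘ (g : Matrix (Fin 2) (Fin 2) (ZMod p)) 1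

lemma eval_bottomRow_mem_indTriv
    (q : homogeneousSubmodule (Fin 2) k 0 × homogeneousSubmodule (Fin 2) k (p - 1)) :
    (fun g => eval (bottomRow p k g) (homogeneousPairSum k (p - 1) q)) ∈ IndTriv p k := by
  intro b g hb
  have hb₁₁ : (b : Matrix (Fin 2) (Fin 2) (ZMod p)) 1 1 ≠ 0 := by
    intro h
    exact b.det_ne_zero (by simp [Matrix.det_fin_two, hb, h])
  have hrow : bottomRow p k (b * g) = ZMod.castHom (dvd_refl p) k (b 1 1) • bottomRow p k g := by
    funext i
    simp [bottomRow, Matrix.mul_apply, Fin.sum_univ_two, hb]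
  dsimp only
  rw [hrow, eval_smul_homogeneousPairSum _
    (by rw [← map_pow, ZMod.pow_card_sub_one_eq_one hb₁₁, map_one])]

noncomputable def polyToIndTriv (p : ℕ) [Fact p.Prime] (k : Type) [Field k] [CharP k p] :
    homogeneousSubmodule (Fin 2) k 0 × homogeneousSubmodule (Fin 2) k (p - 1) →ₗ[k] IndTriv p k :=
  LinearMap.codRestrict (IndTriv p k)
    (LinearMap.pi fun g => (aeval (bottomRow p k g)).toLinearMap ∘ₗ homogeneousPairSum k (p - 1))
    fun q => by
      convert eval_bottomRow_mem_indTriv q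
      simp

lemma polyToIndTriv_apply
    (q : homogeneousSubmodule (Fin 2) k 0 × homogeneousSubmodule (Fin 2) k (p - 1))
    (g : GL (Fin 2) (ZMod p)) :
    (polyToIndTriv p k q : GL (Fin 2) (ZMod p) → k) g =
      eval (bottomRow p k g) (homogeneousPairSum k (p - 1) q) := by
  simp [polyToIndTriv]

lemma restrictProjLine_comp_polyToIndTriv :
    restrictProjLine p k ∘ₗ polyToIndTriv p k =
      evalProjLine (ZMod.castHom (dvd_refl p) k) (p - 1) := by
  refine LinearMap.ext fun q => funext fun o => ?_
  simp [restrictProjLine, evalProjLine_apply, polyToIndTriv_apply, bottomRow,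
    projLineSection_row_one]

lemma polyToIndTriv_bijective : Function.Bijective (polyToIndTriv p k) := by
  have hev := evalProjLine_bijective (ZMod.castHom (dvd_refl p) k)
  rw [ZMod.card, ← restrictProjLine_comp_polyToIndTriv, LinearMap.coe_comp] at hev
  refine ⟨hev.1.of_comp, fun f => ?_⟩
  obtain ⟨q, hq⟩ := hev.2 (restrictProjLine p k f)
  exact ⟨q, restrictProjLine_injective hq⟩

lemma eval_symAct (g : Matrix (Fin 2) (Fin 2) (ZMod p)) (v : Fin 2 → k)
    (Q : MvPolynomial (Fin 2) k) :
    eval v (symAct p k g Q) = eval (Matrix.vecMul v (g.map (ZMod.castHom (dvd_refl p) k))) Q := by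
  induction Q using MvPolynomial.induction_on with
  | C a => simp
  | add Q R hQ hR => simp [hQ, hR]
  | mul_X Q i hQ =>
    rw [map_mul, map_mul, hQ, map_mul, eval_X]
    simp [symAct, Matrix.vecMul, dotProduct, mul_comm]

lemma isHomogeneous_symAct {Q : MvPolynomial (Fin 2) k} {n : ℕ} (hQ : Q.IsHomogeneous n)
    (g : Matrix (Fin 2) (Fin 2) (ZMod p)) : (symAct p k g Q).IsHomogeneous n := by
  simpa using! hQ.aeval _ fun i => (Submodule.sum_mem _ fun j _ =>
    Submodule.smul_mem _ _ (isHomogeneous_X k j) : _ ∈ homogeneousSubmodule (Fin 2) k 1)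

noncomputable def symActHom (g : GL (Fin 2) (ZMod p)) (n : ℕ) :
    homogeneousSubmodule (Fin 2) k n →ₗ[k] homogeneousSubmodule (Fin 2) k n :=
  (symAct p k g).toLinearMap.restrict fun _ hQ => isHomogeneous_symAct hQ _

lemma coe_symActHom (g : GL (Fin 2) (ZMod p)) {n : ℕ} (Q : homogeneousSubmodule (Fin 2) k n) :
    (symActHom g n Q : MvPolynomial (Fin 2) k) = symAct p k g Q :=
  rfl

lemma polyToIndTriv_symActHom (g x : GL (Fin 2) (ZMod p))
    (q : homogeneousSubmodule (Fin 2) k 0 × homogeneousSubmodule (Fin 2) k (p - 1)) :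
    (polyToIndTriv p k ((symActHom g 0).prodMap (symActHom g (p - 1)) q) :
        GL (Fin 2) (ZMod p) → k) x =
      (polyToIndTriv p k q : GL (Fin 2) (ZMod p) → k) (x * g) := by
  have hrow : bottomRow p k (x * g) = Matrix.vecMul (bottomRow p k x)
      ((g : Matrix (Fin 2) (Fin 2) (ZMod p)).map (ZMod.castHom (dvd_refl p) k)) := by
    funext i
    simp [bottomRow, Matrix.mul_apply_eq_vecMul, RingHom.map_vecMul]
  simp [polyToIndTriv_apply, homogeneousPairSum, coe_symActHom, eval_symAct, hrow]

end Decomposition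

theorem ind_trivial_decomposition_general (p : ℕ) [Fact p.Prime]
    (k : Type) [Field k] [CharP k p] :
    ∃ e : IndTriv p k ≃ₗ[k]
        (homogeneousSubmodule (Fin 2) k 0 × homogeneousSubmodule (Fin 2) k (p - 1)),
      ∀ (g : GL (Fin 2) (ZMod p)) (f₁ f₂ : IndTriv p k),
        (∀ x, (f₂ : GL (Fin 2) (ZMod p) → k) x = (f₁ : GL (Fin 2) (ZMod p) → k) (x * g)) →
        ((e f₂).1 : MvPolynomial (Fin 2) k) =
            symAct p k (g : Matrix (Fin 2) (Fin 2) (ZMod p)) ((e f₁).1 : MvPolynomial (Fin 2) k) ∧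
          ((e f₂).2 : MvPolynomial (Fin 2) k) =
            symAct p k (g : Matrix (Fin 2) (Fin 2) (ZMod p)) ((e f₁).2 : MvPolynomial (Fin 2) k) := by
  let Φ := LinearEquiv.ofBijective (polyToIndTriv p k) polyToIndTriv_bijective
  refine ⟨Φ.symm, fun g f₁ f₂ hf => ?_⟩
  have hΦ : polyToIndTriv p k (Φ.symm f₁) = f₁ := Φ.apply_symm_apply f₁
  have h : Φ.symm f₂ = (symActHom g 0).prodMap (symActHom g (p - 1)) (Φ.symm f₁) := by
    rw [LinearEquiv.symm_apply_eq]
    ext x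
    rw [hf, LinearEquiv.ofBijective_apply, polyToIndTriv_symActHom, hΦ]
  rw [h]
  exact ⟨rfl, rfl⟩

/-- `Ind_{B(F_p)}^{GL₂(F_p)}(1) ≅ Sym⁰ ⊕ Sym^{p-1}` as representations of `GL₂(F_p)`, where
`GL₂(F_p)` acts on the induced space by right translation and on each `Sym` factor by linear
substitution. -/
theorem ind_trivial_decomposition (p : ℕ) [Fact p.Prime]
    (k : Type) [Field k] [IsAlgClosed k] [CharP k p] :
    ∃ e : IndTriv p k ≃ₗ[k]
        (homogeneousSubmodule (Fin 2) k 0 × homogeneousSubmodule (Fin 2) k (p - 1)),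
      ∀ (g : GL (Fin 2) (ZMod p)) (f₁ f₂ : IndTriv p k),
        (∀ x, (f₂ : GL (Fin 2) (ZMod p) → k) x = (f₁ : GL (Fin 2) (ZMod p) → k) (x * g)) →
        ((e f₂).1 : MvPolynomial (Fin 2) k) =
            symAct p k (g : Matrix (Fin 2) (Fin 2) (ZMod p)) ((e f₁).1 : MvPolynomial (Fin 2) k) ∧
          ((e f₂).2 : MvPolynomial (Fin 2) k) =
            symAct p k (g : Matrix (Fin 2) (Fin 2) (ZMod p)) ((e f₁).2 : MvPolynomial (Fin 2) k) :=
  ind_trivial_decomposition_general p k
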